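/- Let A be a symmetric n×n matrix over 𝔽₂ having at least one nonzero diagonal entry (a non-alternating matrix), and let r be its rank over 𝔽₂. Then there exists an invertible n×n matrix Q over 𝔽₂ such that QᵀAQ = D, where D is the diagonal matrix with D_{jj} = 1 for j = 1, …, r and D_{jj} = 0 for j = r+1, …, n. -/
import Mathlib

open Matrix

namespace Stmt7Aux

abbrev F2 := ZMod 2

lemma f2_add_self : ∀ x : F2, x + x = 0 := by decide

lemma mat_add_self {m : ℕ} (M : Matrix (Fin m) (Fin m) F2) : M + M = 0 := by
  ext i j; simp [f2_add_self]

lemma f2_ne_zero : ∀ x : F2, x ≠ 0 → x = 1 := by decide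

lemma cong_isSymm {m : ℕ} (A Q : Matrix (Fin m) (Fin m) F2) (h : A.IsSymm) :
    (Qᵀ * A * Q).IsSymm := by
  show _ᵀ = _
  rw [transpose_mul, transpose_mul, transpose_transpose, h.eq, mul_assoc]

lemma sum_ite_single {m : ℕ} (c : Fin m) (f : Fin m → F2) :
    (∑ x : Fin m, if x = c then f x else 0) = f c := by
  rw [Finset.sum_ite_eq' Finset.univ c f]; simp

lemma sum_ite_zero {m : ℕ} (f : Fin (m + 1) → F2) :
    (∑ x : Fin (m + 1), if x = 0 then f x else 0) = f 0 := by
  rw [Finset.sum_ite_eq' Finset.univ 0 f]; simp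

lemma cong_step {m : ℕ} (A S : Matrix (Fin m) (Fin m) F2) (hS : S * S = 0) :
    (1 + S) * (1 + S) = 1 ∧
      (1 + S)ᵀ * A * (1 + S) = A + Sᵀ * A + A * S + Sᵀ * A * S := by
  constructor
  · have h : (1 + S) * (1 + S) = 1 + (S + S) + S * S := by noncomm_ring
    rw [h, hS, mat_add_self, add_zero, add_zero]
  · rw [transpose_add, transpose_one]; noncomm_ring

def clearMat {m : ℕ} (A : Matrix (Fin (m + 1)) (Fin (m + 1)) F2) :
    Matrix (Fin (m + 1)) (Fin (m + 1)) F2 :=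
  Matrix.of fun a b => if a = 0 then (if b = 0 then 1 else 0)
    else if b = 0 then 0 else A a b + A a 0 * A 0 b

lemma clear {m : ℕ} (A : Matrix (Fin (m + 1)) (Fin (m + 1)) F2) (hs : A.IsSymm)
    (h00 : A 0 0 = 1) :
    ∃ Q : Matrix (Fin (m + 1)) (Fin (m + 1)) F2,
      Q * Q = 1 ∧ Qᵀ * A * Q = clearMat A := by
  set S : Matrix (Fin (m + 1)) (Fin (m + 1)) F2 :=
    Matrix.of (fun a b => if a = 0 then (if b = 0 then 0 else A 0 b) else 0) with hSdef
  have hSS : S * S = 0 := by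
    ext a b
    rw [Matrix.mul_apply, Matrix.zero_apply]
    refine Finset.sum_eq_zero fun k _ => ?_
    by_cases hk : k = 0 <;> simp [hSdef, hk]
  obtain ⟨hunit, hcong⟩ := cong_step A S hSS
  refine ⟨1 + S, hunit, ?_⟩
  rw [hcong]
  have hAS : A * S = Matrix.of fun a b => if b = 0 then 0 else A a 0 * A 0 b := by
    ext a b
    rw [Matrix.mul_apply]
    simp only [hSdef, Matrix.of_apply, mul_ite, mul_zero]
    rw [sum_ite_zero (fun x => if b = 0 then 0 else A a x * A 0 b)]
  have hSA : Sᵀ * A = Matrix.of fun a b => if a = 0 then 0 else A 0 a * A 0 b := by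
    ext a b
    rw [Matrix.mul_apply]
    simp only [hSdef, Matrix.transpose_apply, Matrix.of_apply, ite_mul, zero_mul]
    rw [sum_ite_zero (fun x => if a = 0 then 0 else A 0 a * A x b)]
  have hSAS : Sᵀ * A * S = Matrix.of fun a b =>
      if a = 0 then 0 else if b = 0 then 0 else A 0 a * A 0 b := by
    rw [mul_assoc, hAS]
    ext a b
    rw [Matrix.mul_apply]
    simp only [hSdef, Matrix.transpose_apply, Matrix.of_apply, ite_mul, zero_mul]
    rw [sum_ite_zero (fun x => if a = 0 then 0 else
      A 0 a * if b = 0 then 0 else A x 0 * A 0 b)]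
    by_cases ha : a = 0 <;> by_cases hb : b = 0 <;> simp [ha, hb, h00]
  rw [hSAS, hSA, hAS]
  ext a b
  have hsym : A 0 a = A a 0 := hs.apply a 0
  have key4 : ∀ x y : F2, x + y + y + y = x + y := by decide
  simp only [Matrix.add_apply, Matrix.of_apply, clearMat]
  by_cases ha : a = 0 <;> by_cases hb : b = 0
  · simp [ha, hb, h00]
  · simp [ha, hb, h00, f2_add_self]
  · simp [ha, hb, h00, hs.apply a 0, f2_add_self]
  · simp only [ha, hb, if_false, ite_false]
    rw [hsym]
    exact key4 _ _


def oplus {m : ℕ} (c : F2) (B : Matrix (Fin m) (Fin m) F2) :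
    Matrix (Fin (m + 1)) (Fin (m + 1)) F2 :=
  Matrix.of fun a b =>
    Fin.cases (Fin.cases c (fun _ => 0) b) (fun a' => Fin.cases 0 (fun b' => B a' b') b) a

@[simp] lemma oplus_00 {m : ℕ} (c : F2) (B : Matrix (Fin m) (Fin m) F2) :
    oplus c B 0 0 = c := rfl

@[simp] lemma oplus_0s {m : ℕ} (c : F2) (B : Matrix (Fin m) (Fin m) F2) (j : Fin m) :
    oplus c B 0 j.succ = 0 := by simp [oplus]

@[simp] lemma oplus_s0 {m : ℕ} (c : F2) (B : Matrix (Fin m) (Fin m) F2) (i : Fin m) :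
    oplus c B i.succ 0 = 0 := by simp [oplus]

@[simp] lemma oplus_ss {m : ℕ} (c : F2) (B : Matrix (Fin m) (Fin m) F2) (i j : Fin m) :
    oplus c B i.succ j.succ = B i j := by simp [oplus]

lemma oplus_mul {m : ℕ} (c d : F2) (B C : Matrix (Fin m) (Fin m) F2) :
    oplus c B * oplus d C = oplus (c * d) (B * C) := by
  ext a b
  rw [Matrix.mul_apply, Fin.sum_univ_succ]
  induction a using Fin.cases with
  | zero =>
    induction b using Fin.cases with
    | zero => simp
    | succ j => simp
  | succ i =>
    induction b using Fin.cases with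
    | zero => simp
    | succ j => simp [Matrix.mul_apply]

lemma oplus_transpose {m : ℕ} (c : F2) (B : Matrix (Fin m) (Fin m) F2) :
    (oplus c B)ᵀ = oplus c Bᵀ := by
  ext a b
  rw [Matrix.transpose_apply]
  induction a using Fin.cases with
  | zero => induction b using Fin.cases with
    | zero => simp
    | succ j => simp
  | succ i => induction b using Fin.cases with
    | zero => simp
    | succ j => simp

lemma oplus_one {m : ℕ} : oplus 1 (1 : Matrix (Fin m) (Fin m) F2) = 1 := by
  ext a b
  induction a using Fin.cases with
  | zero => induction b using Fin.cases with
    | zero => simp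
    | succ j => simp [Matrix.one_apply, (Fin.succ_ne_zero j).symm]
  | succ i => induction b using Fin.cases with
    | zero => simp [Matrix.one_apply, Fin.succ_ne_zero i]
    | succ j => simp [Matrix.one_apply, Fin.succ_inj]

lemma oplus_isUnit {m : ℕ} (B : Matrix (Fin m) (Fin m) F2) (h : IsUnit B) :
    IsUnit (oplus 1 B) := by
  obtain ⟨V, hV1, hV2⟩ := isUnit_iff_exists.mp h
  refine isUnit_iff_exists.mpr ⟨oplus 1 V, ?_, ?_⟩
  · rw [oplus_mul, hV1, one_mul, oplus_one]
  · rw [oplus_mul, hV2, one_mul, oplus_one]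

def Dmat (n r : ℕ) : Matrix (Fin n) (Fin n) F2 :=
  Matrix.of fun i j => if i = j ∧ i.1 < r then 1 else 0

lemma oplus_Dmat (m r : ℕ) : oplus 1 (Dmat m r) = Dmat (m + 1) (r + 1) := by
  ext a b
  induction a using Fin.cases with
  | zero => induction b using Fin.cases with
    | zero => simp [Dmat]
    | succ j => simp [Dmat, (Fin.succ_ne_zero j).symm]
  | succ i => induction b using Fin.cases with
    | zero => simp [Dmat, Fin.succ_ne_zero i]
    | succ j => simp [Dmat, Fin.succ_inj, Fin.val_succ]

lemma clearMat_oplus {m : ℕ} (A : Matrix (Fin (m + 1)) (Fin (m + 1)) F2) :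
    clearMat A = oplus 1
      (Matrix.of fun a b : Fin m => A a.succ b.succ + A a.succ 0 * A 0 b.succ) := by
  ext a b
  induction a using Fin.cases with
  | zero => induction b using Fin.cases with
    | zero => simp [clearMat]
    | succ j => simp [clearMat, Fin.succ_ne_zero j]
  | succ i => induction b using Fin.cases with
    | zero => simp [clearMat, Fin.succ_ne_zero i]
    | succ j => simp [clearMat, Fin.succ_ne_zero i, Fin.succ_ne_zero j]


lemma perm_cong {m : ℕ} (A : Matrix (Fin m) (Fin m) F2) (e : Equiv.Perm (Fin m)) :
    ∃ Q : Matrix (Fin m) (Fin m) F2, IsUnit Q ∧ Qᵀ * A * Q = A.submatrix e e := by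
  refine ⟨(1 : Matrix (Fin m) (Fin m) F2).submatrix (⇑e.symm) id, ?_, ?_⟩
  · refine isUnit_iff_exists.mpr ⟨(1 : Matrix (Fin m) (Fin m) F2).submatrix (⇑e) id, ?_, ?_⟩
    · rw [Matrix.mul_submatrix_one]
      simp [Matrix.submatrix_submatrix]
    · rw [Matrix.mul_submatrix_one]
      simp [Matrix.submatrix_submatrix]
  · rw [Matrix.transpose_submatrix, Matrix.transpose_one, Matrix.one_submatrix_mul,
      Matrix.mul_submatrix_one]
    simp [Matrix.submatrix_submatrix]

def Smat {m : ℕ} (p : Fin (m + 1)) : Matrix (Fin (m + 1)) (Fin (m + 1)) F2 :=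
  Matrix.of fun a b => if a = p ∧ b = 0 then 1 else 0

lemma Smat_mul_self {m : ℕ} (p : Fin (m + 1)) (hp : p ≠ 0) : Smat p * Smat p = 0 := by
  ext a b
  rw [Matrix.mul_apply, Matrix.zero_apply]
  refine Finset.sum_eq_zero fun k _ => ?_
  by_cases hk : k = 0
  · subst hk; simp [Smat, Ne.symm hp]
  · simp [Smat, hk]

lemma mul_Smat {m : ℕ} (M : Matrix (Fin (m + 1)) (Fin (m + 1)) F2) (p : Fin (m + 1)) :
    M * Smat p = Matrix.of fun a b => if b = 0 then M a p else 0 := by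
  ext a b
  rw [Matrix.mul_apply]
  have h : ∀ k, M a k * Smat p k b = if k = p then (if b = 0 then M a p else 0) else 0 := by
    intro k
    by_cases hk : k = p <;> by_cases hb : b = 0 <;> simp [Smat, hk, hb]
  rw [Finset.sum_congr rfl fun k _ => h k, sum_ite_single]
  simp

lemma Smat_t_mul {m : ℕ} (M : Matrix (Fin (m + 1)) (Fin (m + 1)) F2) (p : Fin (m + 1)) :
    (Smat p)ᵀ * M = Matrix.of fun a b => if a = 0 then M p b else 0 := by
  ext a b
  rw [Matrix.mul_apply]
  have h : ∀ k, (Smat p)ᵀ a k * M k b = if k = p then (if a = 0 then M p b else 0) else 0 := by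
    intro k
    by_cases hk : k = p <;> by_cases ha : a = 0 <;> simp [Smat, hk, ha]
  rw [Finset.sum_congr rfl fun k _ => h k, sum_ite_single]
  simp


lemma key : ∀ (n : ℕ) (A : Matrix (Fin n) (Fin n) F2), A.IsSymm →
    (A = 0 ∨ ∃ i, A i i ≠ 0) →
    ∃ (Q : Matrix (Fin n) (Fin n) F2) (r' : ℕ),
      r' ≤ n ∧ IsUnit Q ∧ Qᵀ * A * Q = Dmat n r' := by
  intro n
  induction n with
  | zero =>
    intro A _ _
    exact ⟨1, 0, le_refl 0, isUnit_one, by ext a; exact a.elim0⟩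
  | succ m IH =>
    intro A hs hO
    rcases hO with h0 | ⟨i, hi⟩
    · subst h0
      refine ⟨1, 0, Nat.zero_le _, isUnit_one, ?_⟩
      ext a b
      simp [Dmat]
    · obtain ⟨Q1, hQ1u, hQ1⟩ := perm_cong A (Equiv.swap 0 i)
      set A1 := A.submatrix (⇑(Equiv.swap 0 i)) (⇑(Equiv.swap 0 i)) with hA1def
      have hA1s : A1.IsSymm := by
        show A1ᵀ = A1
        rw [hA1def, Matrix.transpose_submatrix, hs.eq]
      have hA100 : A1 0 0 = 1 := by
        have h : A1 0 0 = A i i := by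
          rw [hA1def, Matrix.submatrix_apply, Equiv.swap_apply_left]
        rw [h]
        exact f2_ne_zero _ hi
      obtain ⟨Q2, hQ2sq, hQ2⟩ := clear A1 hA1s hA100
      have hQ2u : IsUnit Q2 := isUnit_iff_exists.mpr ⟨Q2, hQ2sq, hQ2sq⟩
      set B := Matrix.of (fun a b : Fin m =>
        A1 a.succ b.succ + A1 a.succ 0 * A1 0 b.succ) with hBdef
      have hA2 : clearMat A1 = oplus 1 B := clearMat_oplus A1
      have hA2s : (clearMat A1).IsSymm := by
        rw [← hQ2]; exact cong_isSymm _ _ hA1s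
      have hBs : B.IsSymm := by
        refine Matrix.IsSymm.ext fun a b => ?_
        have h1 : B b a = (clearMat A1) b.succ a.succ := by rw [hA2, oplus_ss]
        have h2 : B a b = (clearMat A1) a.succ b.succ := by rw [hA2, oplus_ss]
        rw [h1, h2, hA2s.apply]
      by_cases hB : B = 0 ∨ ∃ k, B k k ≠ 0
      · obtain ⟨QB, rB, hrB, hQBu, hQB⟩ := IH B hBs hB
        refine ⟨Q1 * Q2 * oplus 1 QB, rB + 1, Nat.succ_le_succ hrB,
          (hQ1u.mul hQ2u).mul (oplus_isUnit QB hQBu), ?_⟩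
        have hassoc : (Q1 * Q2 * oplus 1 QB)ᵀ * A * (Q1 * Q2 * oplus 1 QB)
            = (oplus 1 QB)ᵀ * (Q2ᵀ * (Q1ᵀ * A * Q1) * Q2) * oplus 1 QB := by
          rw [transpose_mul, transpose_mul]
          noncomm_ring
        rw [hassoc, hQ1, hQ2, hA2, oplus_transpose, oplus_mul, oplus_mul, one_mul, one_mul,
          hQB, oplus_Dmat]
      · push_neg at hB
        obtain ⟨hBne, hBd⟩ := hB
        obtain ⟨p, q, hpq⟩ : ∃ p q, B p q ≠ 0 := by
          by_contra hc
          push_neg at hc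
          exact hBne (by ext a b; simp [hc a b])
        have hSS : Smat (p.succ) * Smat (p.succ) = 0 :=
          Smat_mul_self p.succ (Fin.succ_ne_zero p)
        obtain ⟨hTsq, hTcong⟩ := cong_step (clearMat A1) (Smat p.succ) hSS
        have hTu : IsUnit (1 + Smat p.succ) := isUnit_iff_exists.mpr ⟨_, hTsq, hTsq⟩
        set A3 := Matrix.of (fun a b : Fin (m+1) =>
          (clearMat A1) a b + (if a = 0 then (clearMat A1) p.succ b else 0)
            + (if b = 0 then (clearMat A1) a p.succ else 0)) with hA3def
        have hA3eq : (1 + Smat p.succ)ᵀ * clearMat A1 * (1 + Smat p.succ) = A3 := by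
          rw [hTcong, mul_Smat, Smat_t_mul, mul_Smat]
          ext a b
          simp only [Matrix.add_apply, Matrix.of_apply, hA3def]
          have hpp : (clearMat A1) p.succ p.succ = 0 := by
            rw [hA2, oplus_ss, hBd]
          by_cases ha : a = 0 <;> by_cases hb : b = 0 <;> simp [ha, hb, hpp]
        have hA3s : A3.IsSymm := by
          rw [← hA3eq]; exact cong_isSymm _ _ hA2s
        have hA300 : A3 0 0 = 1 := by
          simp [hA3def, hA2]
        obtain ⟨Q4, hQ4sq, hQ4⟩ := clear A3 hA3s hA300
        have hQ4u : IsUnit Q4 := isUnit_iff_exists.mpr ⟨Q4, hQ4sq, hQ4sq⟩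
        set B2 := Matrix.of (fun a b : Fin m =>
          A3 a.succ b.succ + A3 a.succ 0 * A3 0 b.succ) with hB2def
        have hA4 : clearMat A3 = oplus 1 B2 := clearMat_oplus A3
        have hA4s : (clearMat A3).IsSymm := by
          rw [← hQ4]; exact cong_isSymm _ _ hA3s
        have hB2s : B2.IsSymm := by
          refine Matrix.IsSymm.ext fun a b => ?_
          have h1 : B2 b a = (clearMat A3) b.succ a.succ := by rw [hA4, oplus_ss]
          have h2 : B2 a b = (clearMat A3) a.succ b.succ := by rw [hA4, oplus_ss]
          rw [h1, h2, hA4s.apply]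
        have hB2qq : B2 q q ≠ 0 := by
          have h1 : A3 q.succ q.succ = 0 := by
            simp [hA3def, Fin.succ_ne_zero q, hA2, hBd]
          have h2 : A3 q.succ 0 = B q p := by
            simp [hA3def, Fin.succ_ne_zero q, hA2]
          have h3 : A3 0 q.succ = B p q := by
            simp [hA3def, Fin.succ_ne_zero q, hA2]
          have h4 : B q p = B p q := hBs.apply p q
          have h5 : B p q = 1 := f2_ne_zero _ hpq
          rw [hB2def]
          simp only [Matrix.of_apply, h1, h2, h3, h4, h5, zero_add, one_mul]
          exact one_ne_zero
        obtain ⟨QB, rB, hrB, hQBu, hQB⟩ := IH B2 hB2s (Or.inr ⟨q, hB2qq⟩)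
        refine ⟨Q1 * Q2 * (1 + Smat p.succ) * Q4 * oplus 1 QB, rB + 1,
          Nat.succ_le_succ hrB,
          (((hQ1u.mul hQ2u).mul hTu).mul hQ4u).mul (oplus_isUnit QB hQBu), ?_⟩
        have hassoc : (Q1 * Q2 * (1 + Smat p.succ) * Q4 * oplus 1 QB)ᵀ * A *
              (Q1 * Q2 * (1 + Smat p.succ) * Q4 * oplus 1 QB)
            = (oplus 1 QB)ᵀ * (Q4ᵀ * ((1 + Smat p.succ)ᵀ *
                (Q2ᵀ * (Q1ᵀ * A * Q1) * Q2) * (1 + Smat p.succ)) * Q4) * oplus 1 QB := by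
          rw [transpose_mul, transpose_mul, transpose_mul, transpose_mul]
          noncomm_ring
        rw [hassoc, hQ1, hQ2, hA3eq, hQ4, hA4, oplus_transpose, oplus_mul, oplus_mul,
          one_mul, one_mul, hQB, oplus_Dmat]


lemma rank_Dmat (n r : ℕ) (h : r ≤ n) : (Dmat n r).rank = r := by
  have hdiag : Dmat n r = Matrix.diagonal (fun i : Fin n => if i.1 < r then (1 : F2) else 0) := by
    ext a b
    rw [Matrix.diagonal_apply]
    by_cases hab : a = b
    · subst hab; simp [Dmat]
    · simp [Dmat, hab]
  rw [hdiag, Matrix.rank_diagonal]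
  have e : {i : Fin n // (if i.1 < r then (1 : F2) else 0) ≠ 0} ≃ Fin r :=
    { toFun := fun x => ⟨x.1.1, by
        by_contra hx
        exact x.2 (by simp [Nat.lt_of_lt_of_le, if_neg hx])⟩
      invFun := fun j => ⟨⟨j.1, lt_of_lt_of_le j.2 h⟩, by simp [j.2]⟩
      left_inv := fun x => by ext; rfl
      right_inv := fun j => by ext; rfl }
  rw [Fintype.card_congr e, Fintype.card_fin]

lemma rank_cong {n : ℕ} (A Q : Matrix (Fin n) (Fin n) F2) (hQ : IsUnit Q) :
    (Qᵀ * A * Q).rank = A.rank := by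
  have hdet : IsUnit Q.det := (Matrix.isUnit_iff_isUnit_det Q).mp hQ
  have hdetT : IsUnit Qᵀ.det := by rwa [Matrix.det_transpose]
  rw [Matrix.rank_mul_eq_left_of_isUnit_det Q (Qᵀ * A) hdet,
    Matrix.rank_mul_eq_right_of_isUnit_det Qᵀ A hdetT]

end Stmt7Aux

theorem stmt_7 (n : ℕ) (A : Matrix (Fin n) (Fin n) (ZMod 2)) (hA : A.IsSymm)
    (hnonalt : ∃ i, A i i ≠ 0) (r : ℕ) (hr : r = A.rank) :
    ∃ Q : Matrix (Fin n) (Fin n) (ZMod 2), IsUnit Q ∧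
      Qᵀ * A * Q = Matrix.of (fun i j : Fin n =>
        if i = j ∧ i.1 < r then 1 else 0) := by
  obtain ⟨Q, r', hr'n, hQu, hQD⟩ := Stmt7Aux.key n A hA (Or.inr hnonalt)
  have hrank : A.rank = r' := by
    rw [← Stmt7Aux.rank_cong A Q hQu, hQD, Stmt7Aux.rank_Dmat n r' hr'n]
  have hrr' : r = r' := by rw [hr, hrank]
  subst hrr'
  exact ⟨Q, hQu, hQD⟩
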